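/- (MaxEnt upper bound via AMEF) For any continuous random variable X on ℝ with density q satisfying E_q[|X|^l] = η < ∞ and finite differential entropy, H(q) ≤ b_l + (1/l)·log η, where b_l = log 2 + log Γ(1/l) − log l + (1/l)(1 + log l). -/

import Mathlib

/-!
Gibbs' inequality (nonnegativity of the Kullback–Leibler divergence, pointwise just
`log t ≤ t - 1`) bounds the entropy of `q` by its cross entropy against any positive density.
Against the AMEF density `exp (-b |x|^p) / Z(p, b)` the cross entropy is `log Z(p, b) + b η`,
which only sees the `p`-th absolute moment `η` of `q`; the rate `b = 1 / (p η)`, for which the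
AMEF itself has moment `η`, turns it into the stated bound.
-/

open Real MeasureTheory Set

lemma neg_mul_log_le_sub_sub_mul_log {a c : ℝ} (ha : 0 ≤ a) (hc : 0 < c) :
    -(a * log a) ≤ c - a - a * log c := by
  rcases ha.eq_or_lt with rfl | ha
  · simpa using hc.le
  have h := mul_le_mul_of_nonneg_left (log_le_sub_one_of_pos (div_pos hc ha)) ha.le
  rw [log_div hc.ne' ha.ne', mul_sub, mul_sub, mul_div_cancel₀ _ ha.ne'] at h
  linarith

theorem neg_integral_mul_log_le_neg_integral_mul_log {α : Type*} [MeasurableSpace α]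
    {μ : Measure α} {p q : α → ℝ} (hq : ∀ x, 0 ≤ q x) (hp : ∀ x, 0 < p x)
    (hp_int : Integrable p μ) (hq_int : Integrable q μ)
    (hqq : Integrable (fun x => q x * log (q x)) μ)
    (hqp : Integrable (fun x => q x * log (p x)) μ) (hpq : ∫ x, p x ∂μ = ∫ x, q x ∂μ) :
    -∫ x, q x * log (q x) ∂μ ≤ -∫ x, q x * log (p x) ∂μ := by
  have hpq_int : Integrable (fun x => p x - q x) μ := hp_int.sub hq_int
  have h : ∫ x, -(q x * log (q x)) ∂μ ≤ ∫ x, (p x - q x - q x * log (p x)) ∂μ :=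
    integral_mono hqq.neg (hpq_int.sub hqp) fun x => neg_mul_log_le_sub_sub_mul_log (hq x) (hp x)
  rw [integral_neg, integral_sub hpq_int hqp, integral_sub hp_int hq_int, hpq,
    sub_self, zero_sub] at h
  exact h

lemma integrable_comp_abs {f : ℝ → ℝ} (hf : IntegrableOn f (Ioi 0)) :
    Integrable fun x => f |x| := by
  have h_Ioi : IntegrableOn (fun x => f |x|) (Ioi 0) :=
    hf.congr_fun (fun x hx => by rw [abs_of_pos hx]) measurableSet_Ioi
  have h_Iic : IntegrableOn (fun x => f |x|) (Iic 0) := by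
    have h_neg : MeasurableEmbedding fun x : ℝ => -x := (Homeomorph.neg ℝ).measurableEmbedding
    rw [← Measure.map_neg_eq_self (volume : Measure ℝ), h_neg.integrableOn_map_iff]
    simp_rw [Function.comp_def, abs_neg, neg_preimage, neg_Iic, neg_zero]
    exact Iff.mpr integrableOn_Ici_iff_integrableOn_Ioi h_Ioi
  rw [← integrableOn_univ, ← Iic_union_Ioi (a := (0 : ℝ))]
  exact h_Iic.union h_Ioi

section AMEF

variable {p b : ℝ}

lemma integrable_exp_neg_mul_abs_rpow (hp : 0 < p) (hb : 0 < b) :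
    Integrable fun x : ℝ => exp (-b * |x| ^ p) :=
  integrable_comp_abs (f := fun x => exp (-b * x ^ p)) <| by
    simpa using integrableOn_rpow_mul_exp_neg_mul_rpow neg_one_lt_zero hp hb

/-- Normalizing constant `∫ exp (-b * |x| ^ p) dx` of the absolute moment exponential family. -/
noncomputable def amefNormalizer (p b : ℝ) : ℝ := 2 * (b ^ (-1 / p) * Gamma (1 / p + 1))

/-- Density of the absolute moment exponential family (AMEF) of degree `p`; the rate `b` is the
paper's `λ`. -/
noncomputable def amefDensity (p b x : ℝ) : ℝ := exp (-b * |x| ^ p) / amefNormalizer p b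

lemma integral_exp_neg_mul_abs_rpow (hp : 0 < p) (hb : 0 < b) :
    ∫ x : ℝ, exp (-b * |x| ^ p) = amefNormalizer p b := by
  rw [integral_comp_abs (f := fun x => exp (-b * x ^ p)), integral_exp_neg_mul_rpow hp hb,
    amefNormalizer]

lemma amefNormalizer_pos (hp : 0 < p) (hb : 0 < b) : 0 < amefNormalizer p b := by
  have := Gamma_pos_of_pos (by positivity : 0 < 1 / p + 1)
  unfold amefNormalizer
  positivity

lemma amefDensity_pos (hp : 0 < p) (hb : 0 < b) (x : ℝ) : 0 < amefDensity p b x :=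
  div_pos (exp_pos _) (amefNormalizer_pos hp hb)

lemma integrable_amefDensity (hp : 0 < p) (hb : 0 < b) : Integrable (amefDensity p b) :=
  (integrable_exp_neg_mul_abs_rpow hp hb).div_const _

lemma integral_amefDensity (hp : 0 < p) (hb : 0 < b) : ∫ x, amefDensity p b x = 1 := by
  simp only [amefDensity]
  rw [integral_div, integral_exp_neg_mul_abs_rpow hp hb,
    div_self (amefNormalizer_pos hp hb).ne']

lemma log_amefDensity (hp : 0 < p) (hb : 0 < b) (x : ℝ) :
    log (amefDensity p b x) = -log (amefNormalizer p b) - b * |x| ^ p := by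
  rw [amefDensity, log_div (exp_pos _).ne' (amefNormalizer_pos hp hb).ne', log_exp]
  ring

variable {q : ℝ → ℝ} {η : ℝ}

lemma mul_log_amefDensity (hp : 0 < p) (hb : 0 < b) :
    (fun x => q x * log (amefDensity p b x)) =
      fun x => -log (amefNormalizer p b) * q x - b * (|x| ^ p * q x) := by
  ext x
  rw [log_amefDensity hp hb]
  ring

lemma neg_integral_mul_log_amefDensity (hp : 0 < p) (hb : 0 < b) (hq_int : Integrable q)
    (hq_one : ∫ x, q x = 1) (hmom_int : Integrable fun x => |x| ^ p * q x)
    (hmom : ∫ x, |x| ^ p * q x = η) :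
    Integrable (fun x => q x * log (amefDensity p b x)) ∧
      -∫ x, q x * log (amefDensity p b x) = log (amefNormalizer p b) + b * η := by
  rw [mul_log_amefDensity hp hb]
  refine ⟨(hq_int.const_mul _).sub (hmom_int.const_mul _), ?_⟩
  rw [integral_sub (hq_int.const_mul _) (hmom_int.const_mul _), integral_const_mul,
    integral_const_mul, hq_one, hmom]
  ring

/-- The entropy of the AMEF of degree `p` whose `p`-th absolute moment is `η`
(its rate is `1 / (p η)`). -/
lemma log_amefNormalizer_add (hp : 0 < p) (hη : 0 < η) :
    log (amefNormalizer p (p * η)⁻¹) + (p * η)⁻¹ * η =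
      log 2 + log (Gamma (1 / p)) - log p + 1 / p * (1 + log p) + 1 / p * log η := by
  have hΓ := Gamma_pos_of_pos (one_div_pos.mpr hp)
  rw [amefNormalizer, log_mul two_ne_zero (by positivity), log_mul (by positivity) (by positivity),
    log_rpow (by positivity), log_inv, log_mul hp.ne' hη.ne', Gamma_add_one (by positivity),
    log_mul (by positivity) hΓ.ne', one_div, log_inv]
  field_simp
  ring

end AMEF

lemma integral_abs_rpow_mul_pos {p : ℝ} {q : ℝ → ℝ} (hq : ∀ x, 0 ≤ q x)
    (hq_ne : ∫ x, q x ≠ 0) (hmom_int : Integrable fun x => |x| ^ p * q x) :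
    0 < ∫ x, |x| ^ p * q x := by
  have hmom_nonneg : ∀ x, 0 ≤ |x| ^ p * q x := fun x => mul_nonneg (by positivity) (hq x)
  refine (integral_nonneg hmom_nonneg).lt_of_ne' fun h => hq_ne ?_
  have hmom_ae := (integral_eq_zero_iff_of_nonneg hmom_nonneg hmom_int).mp h
  refine integral_eq_zero_of_ae ?_
  filter_upwards [hmom_ae, compl_mem_ae_iff.mpr (measure_singleton (0 : ℝ))] with x hx hx0
  have hx0 : |x| ^ p ≠ 0 := (rpow_pos_of_pos (abs_pos.mpr hx0) p).ne'
  simpa [hx0] using hx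

theorem neg_integral_mul_log_le_of_integral_abs_rpow_mul {p η : ℝ} {q : ℝ → ℝ} (hp : 0 < p)
    (hq_nonneg : ∀ x, 0 ≤ q x) (hq_int : Integrable q) (hq_one : ∫ x, q x = 1)
    (hmom_int : Integrable fun x => |x| ^ p * q x) (hmom : ∫ x, |x| ^ p * q x = η)
    (hent_int : Integrable fun x => q x * log (q x)) :
    -∫ x, q x * log (q x) ≤
      log 2 + log (Gamma (1 / p)) - log p + 1 / p * (1 + log p) + 1 / p * log η := by
  have hη : 0 < η :=
    hmom ▸ integral_abs_rpow_mul_pos hq_nonneg (hq_one ▸ one_ne_zero) hmom_int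
  have hb : 0 < (p * η)⁻¹ := by positivity
  obtain ⟨hcross_int, hcross⟩ :=
    neg_integral_mul_log_amefDensity hp hb hq_int hq_one hmom_int hmom
  calc -∫ x, q x * log (q x)
      ≤ -∫ x, q x * log (amefDensity p (p * η)⁻¹ x) :=
        neg_integral_mul_log_le_neg_integral_mul_log hq_nonneg (amefDensity_pos hp hb)
          (integrable_amefDensity hp hb) hq_int hent_int hcross_int
          (by rw [integral_amefDensity hp hb, hq_one])
    _ = _ := by rw [hcross, log_amefNormalizer_add hp hη]

theorem amef_maxent_upper_bound (l : ℕ) (hl : 1 ≤ l) (q : ℝ → ℝ)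
    (hq_nonneg : ∀ x, 0 ≤ q x)
    (hq_int : Integrable q)
    (hq_one : ∫ x : ℝ, q x = 1)
    (η : ℝ)
    (hmom_int : Integrable (fun x : ℝ => |x| ^ l * q x))
    (hmom : ∫ x : ℝ, |x| ^ l * q x = η)
    (hent_int : Integrable (fun x : ℝ => q x * Real.log (q x)))
    (b : ℝ)
    (hb : b = Real.log 2 + Real.log (Real.Gamma (1 / l)) - Real.log l +
      (1 / l) * (1 + Real.log l)) :
    -∫ x : ℝ, q x * Real.log (q x) ≤ b + (1 / l) * Real.log η := by
  have hpow (x : ℝ) : |x| ^ l = |x| ^ (l : ℝ) := (rpow_natCast _ _).symm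
  simp only [hpow] at hmom_int hmom
  rw [hb]
  exact neg_integral_mul_log_le_of_integral_abs_rpow_mul (Nat.cast_pos.mpr hl) hq_nonneg hq_int
    hq_one hmom_int hmom hent_int
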